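/- arXiv:0808.3597 — 3 statements merged into one kernel-verified Lean document; each statement's English description precedes it below -/
import Mathlib

section
/- Let p be a permutation of Z_d and let ρ be a Hermitian d²×d² complex matrix supported in M_p. Then ρ is positive semidefinite if and only if for every x ∈ Z_d the d×d matrix A^x with entries A^x_{j,k} = ρ_{j (p(j)+x), k (p(k)+x)} (j,k ∈ Z_d) is positive semidefinite. -/
/-!
Shearing the second coordinate, `(j, x) ↦ (j, p j + x)`, is a bijection of the index set which
turns the support condition into block diagonality: it conjugates `ρ` into the block diagonal
matrix with blocks `A^x`. Conjugation by a permutation preserves positive semidefiniteness, and a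
block diagonal matrix is positive semidefinite exactly when each block is, since its quadratic
form is the sum of those of the blocks.
-/

open scoped ComplexOrder
open Matrix

namespace Matrix

variable {m o R : Type*} [DecidableEq o]

theorem blockDiagonal_submatrix_prodMk [Zero R] (M : o → Matrix m m R) (k : o) :
    (blockDiagonal M).submatrix (·, k) (·, k) = M k := by
  ext i j
  simp

variable [Fintype m] [Fintype o]

theorem star_dotProduct_blockDiagonal_mulVec [NonUnitalNonAssocSemiring R] [StarRing R]
    (M : o → Matrix m m R) (x : m × o → R) :
    star x ⬝ᵥ (blockDiagonal M *ᵥ x) =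
      ∑ k, star (fun i => x (i, k)) ⬝ᵥ (M k *ᵥ fun i => x (i, k)) := by
  simp only [dotProduct, mulVec, blockDiagonal_apply, Fintype.sum_prod_type, ite_mul, zero_mul,
    Finset.sum_ite_eq, Finset.mem_univ, if_true, Pi.star_apply]
  rw [Finset.sum_comm]

theorem posSemidef_blockDiagonal_iff [Ring R] [PartialOrder R] [StarRing R] [AddLeftMono R]
    {M : o → Matrix m m R} : (blockDiagonal M).PosSemidef ↔ ∀ k, (M k).PosSemidef := by
  refine ⟨fun h k => blockDiagonal_submatrix_prodMk M k ▸ h.submatrix _, fun h => ?_⟩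
  refine .of_dotProduct_mulVec_nonneg (isHermitian_blockDiagonal_iff.2 fun k => (h k).1)
    fun x => ?_
  rw [star_dotProduct_blockDiagonal_mulVec]
  exact Finset.sum_nonneg fun k _ => (h k).dotProduct_mulVec_nonneg _

end Matrix

section Shear

variable {ι G α : Type*} [AddCommGroup G] [DecidableEq G] [Zero α]

def shearEquiv (p : ι → G) : ι × G ≃ ι × G :=
  Equiv.prodShear (Equiv.refl ι) fun j => Equiv.addLeft (p j)

theorem submatrix_shearEquiv_eq_blockDiagonal (p : ι → G) (ρ : Matrix (ι × G) (ι × G) α)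
    (hsupp : ∀ j1 j2 k1 k2, j2 - p j1 ≠ k2 - p k1 → ρ (j1, j2) (k1, k2) = 0) :
    ρ.submatrix (shearEquiv p) (shearEquiv p) =
      blockDiagonal fun x => of fun j k => ρ (j, p j + x) (k, p k + x) := by
  ext ⟨j, x⟩ ⟨k, y⟩
  by_cases hxy : x = y
  · subst hxy
    simp [shearEquiv]
  · simp [shearEquiv, blockDiagonal_apply_ne _ _ _ hxy, hsupp, hxy]

end Shear

theorem posSemidef_iff_blocks_general (d : ℕ) [NeZero d]
    (p : Equiv.Perm (ZMod d))
    (ρ : Matrix (ZMod d × ZMod d) (ZMod d × ZMod d) ℂ)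
    (hsupp : ∀ j1 j2 k1 k2 : ZMod d, j2 - p j1 ≠ k2 - p k1 → ρ (j1, j2) (k1, k2) = 0) :
    ρ.PosSemidef ↔
      ∀ x : ZMod d,
        (Matrix.of fun j k : ZMod d => ρ (j, p j + x) (k, p k + x)).PosSemidef := by
  rw [← posSemidef_submatrix_equiv (shearEquiv p),
    submatrix_shearEquiv_eq_blockDiagonal p ρ hsupp, posSemidef_blockDiagonal_iff]

/-- Let `p` be a permutation of `Z_d` and `ρ` a Hermitian
`d²×d²` complex matrix supported in `M_p` (i.e. `ρ_{j1 j2, k1 k2} = 0` whenever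
`j2 − p(j1) ≠ k2 − p(k1)`).  Then `ρ` is positive semidefinite iff for every
`x ∈ Z_d` the `d×d` matrix `A^x` with entries
`A^x_{j,k} = ρ_{j (p(j)+x), k (p(k)+x)}` is positive semidefinite. -/
theorem posSemidef_iff_blocks (d : ℕ) [NeZero d] (hd : 2 ≤ d)
    (p : Equiv.Perm (ZMod d))
    (ρ : Matrix (ZMod d × ZMod d) (ZMod d × ZMod d) ℂ)
    (hherm : ρ.IsHermitian)
    (hsupp : ∀ j1 j2 k1 k2 : ZMod d, j2 - p j1 ≠ k2 - p k1 → ρ (j1, j2) (k1, k2) = 0) :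
    ρ.PosSemidef ↔
      ∀ x : ZMod d,
        (Matrix.of fun j k : ZMod d => ρ (j, p j + x) (k, p k + x)).PosSemidef :=
  posSemidef_iff_blocks_general d p ρ hsupp
end

section
/- Let ρ be a bipartite density on C^d ⊗ C^d and for u1,v1,u2,v2 ∈ Z_d set s_{(u1,u2),(v1,v2)} = Tr((S_{u1,v1} ⊗ S_{u2,v2})† ρ). If Σ_{u1,v1,u2,v2 ∈ Z_d} |s_{(u1,u2),(v1,v2)}| ≤ 2, then ρ is separable. -/
open Matrix Kronecker
open scoped ComplexOrder

/-- `η = exp(2πi/d)`. -/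
noncomputable def eta (d : ℕ) : ℂ := Complex.exp (2 * Real.pi * Complex.I / d)

/-- The generalized spin matrix `S_{j,k} = Σ_m η^{jm} |m⟩⟨m+k|`. -/
noncomputable def spinS (d : ℕ) (j k : ZMod d) : Matrix (ZMod d) (ZMod d) ℂ :=
  Matrix.of fun m n => if n = m + k then eta d ^ (j.val * m.val) else 0

/-- A bipartite density on `C^d ⊗ C^d` is separable if it is a finite convex
combination of Kronecker products of `d×d` densities. -/
def IsSeparableState {d : ℕ} [NeZero d]
    (ρ : Matrix (ZMod d × ZMod d) (ZMod d × ZMod d) ℂ) : Prop :=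
  ∃ (n : ℕ) (w : Fin n → ℝ) (σ τ : Fin n → Matrix (ZMod d) (ZMod d) ℂ),
    (∀ i, 0 ≤ w i) ∧ (∑ i, w i = 1) ∧
    (∀ i, (σ i).PosSemidef ∧ (σ i).trace = 1) ∧
    (∀ i, (τ i).PosSemidef ∧ (τ i).trace = 1) ∧
    ρ = ∑ i, (w i : ℂ) • (σ i ⊗ₖ τ i)

/-!
Put `K_γ = S_{u₁,v₁} ⊗ S_{u₂,v₂}` and `s_γ = Tr (K_γ† ρ)`. The spin matrices form a tight frame,
so `d² ρ = ∑_γ s_γ K_γ`, and as `ρ` is Hermitian `d² ρ = ½ ∑_γ (s_γ K_γ + s̄_γ K_γ†)`.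

Each spin matrix `S` is unitary and commutes with every other spin matrix up to a phase, so the
orbit of one eigenprojection of `S` under conjugation by the spin matrices consists of densities
`Pᵢ` with `∑ Pᵢ = d • 1` and `∑ μᵢ Pᵢ = d • S`, `|μᵢ| = 1`. Hence for every `s`,
`|s| • 1 + ½ (s K + s̄ K†) = d⁻² ∑_{i,j} (|s| + Re (s μᵢ νⱼ)) Pᵢ ⊗ Qⱼ` is a nonnegative
combination of product states. The term `γ = 0` is `2 • 1`, so
`d² ρ = (2 - ∑_γ |s_γ|) • 1 + ∑_{γ ≠ 0} (|s_γ| • 1 + ½ (s_γ K_γ + s̄_γ K_γ†))`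
is separable once `∑_γ |s_γ| ≤ 2`.
-/

namespace Matrix

variable {m n ι κ : Type*}

def IsDensity [Fintype m] (σ : Matrix m m ℂ) : Prop := σ.PosSemidef ∧ σ.trace = 1

section SeparableCone

variable [Fintype m] [Fintype n]

variable (m n) in
noncomputable def separableCone : PointedCone ℝ (Matrix (m × n) (m × n) ℂ) :=
  PointedCone.hull ℝ {M | ∃ σ τ, IsDensity σ ∧ IsDensity τ ∧ σ ⊗ₖ τ = M}

lemma kronecker_mem_separableCone {σ : Matrix m m ℂ} {τ : Matrix n n ℂ} (hσ : IsDensity σ)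
    (hτ : IsDensity τ) : σ ⊗ₖ τ ∈ separableCone m n :=
  Submodule.subset_span ⟨σ, τ, hσ, hτ, rfl⟩

lemma ofReal_smul_mem_separableCone {r : ℝ} (hr : 0 ≤ r) {M : Matrix (m × n) (m × n) ℂ}
    (hM : M ∈ separableCone m n) : (r : ℂ) • M ∈ separableCone m n :=
  (separableCone m n).smul_mem hr hM

lemma ofReal_smul_mem_separableCone_iff {r : ℝ} (hr : 0 < r) {M : Matrix (m × n) (m × n) ℂ} :
    (r : ℂ) • M ∈ separableCone m n ↔ M ∈ separableCone m n :=
  (separableCone m n).smul_mem_iff hr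

end SeparableCone

lemma sum_smul_kronecker_sum_smul {l p : Type*} [Fintype ι] [Fintype κ] (a : ι → ℂ) (b : κ → ℂ)
    (A : ι → Matrix l m ℂ) (B : κ → Matrix n p ℂ) :
    (∑ i, a i • A i) ⊗ₖ (∑ j, b j • B j) = ∑ i, ∑ j, (a i * b j) • (A i ⊗ₖ B j) := by
  ext ⟨x, y⟩ ⟨z, w⟩
  simp only [kronecker_apply, sum_apply, smul_apply, smul_eq_mul, Finset.sum_mul_sum]
  exact Finset.sum_congr rfl fun i _ => Finset.sum_congr rfl fun j _ => by ring

lemma trace_conjTranspose_mul [Fintype m] [Fintype n] (A B : Matrix m n ℂ) :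
    (Aᴴ * B).trace = ∑ p, ∑ q, star (A p q) * B p q := by
  simp only [trace, diag_apply, mul_apply, conjTranspose_apply]
  exact Finset.sum_comm

-- Entrywise form of `∑ᵢ Tr (Eᵢ† M) • Eᵢ = c • M`, see `sum_trace_conjTranspose_mul_smul`.
def IsTightFrame [Fintype ι] [DecidableEq m] [DecidableEq n] (E : ι → Matrix m n ℂ) (c : ℝ) :
    Prop :=
  ∀ p q, ∑ i, star (E i p q) • E i = (c : ℂ) • single p q 1

namespace IsTightFrame

variable [Fintype ι] [DecidableEq m] [DecidableEq n] {E : ι → Matrix m n ℂ} {c : ℝ}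

lemma sum_star_mul_apply (hE : IsTightFrame E c) (p q a b) :
    ∑ i, star (E i p q) * E i a b = if p = a ∧ q = b then (c : ℂ) else 0 := by
  simpa [sum_apply, single_apply] using congrFun (congrFun (hE p q) a) b

lemma sum_trace_conjTranspose_mul_smul [Fintype m] [Fintype n] (hE : IsTightFrame E c)
    (M : Matrix m n ℂ) : ∑ i, ((E i)ᴴ * M).trace • E i = (c : ℂ) • M := by
  simp only [trace_conjTranspose_mul, Finset.sum_smul]
  rw [Finset.sum_comm]
  conv_rhs => rw [matrix_eq_sum_single M]
  simp only [Finset.smul_sum]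
  refine Finset.sum_congr rfl fun p _ => ?_
  rw [Finset.sum_comm]
  refine Finset.sum_congr rfl fun q _ => ?_
  simp only [mul_comm _ (M p q), mul_smul, ← Finset.smul_sum, hE p q, smul_single, smul_eq_mul,
    mul_one]

lemma kronecker {l p : Type*} [Fintype κ] [DecidableEq l] [DecidableEq p]
    {F : κ → Matrix l p ℂ} {c' : ℝ} (hE : IsTightFrame E c) (hF : IsTightFrame F c') :
    IsTightFrame (fun ij : ι × κ => E ij.1 ⊗ₖ F ij.2) (c * c') := by
  rintro ⟨p₁, p₂⟩ ⟨q₁, q₂⟩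
  simp only [kronecker_apply, star_mul', Fintype.sum_prod_type]
  rw [← sum_smul_kronecker_sum_smul, hE, hF, smul_kronecker, kronecker_smul, smul_smul,
    single_kronecker_single, mul_one, Complex.ofReal_mul]

lemma sum_mul_mul_conjTranspose [Fintype n] (hE : IsTightFrame E c) (X : Matrix n n ℂ) :
    ∑ i, E i * X * (E i)ᴴ = ((c : ℂ) * X.trace) • 1 := by
  ext a b
  have key x y : ∑ i, E i a x * X x y * star (E i b y) =
      if b = a ∧ y = x then c * X x y else 0 := by
    rw [← ite_zero_mul, ← hE.sum_star_mul_apply, Finset.sum_mul]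
    exact Finset.sum_congr rfl fun i _ => by ring
  simp only [sum_apply, mul_apply, conjTranspose_apply, Finset.sum_mul]
  rw [Finset.sum_comm]
  simp_rw [Finset.sum_comm (s := (Finset.univ : Finset ι)), key]
  simp only [smul_apply, one_apply, trace, diag_apply, eq_comm (a := b), Finset.mul_sum, ite_and]
  split_ifs <;> simp

end IsTightFrame

lemma sum_star_smul_of_isHermitian [Fintype ι] {P : ι → Matrix m m ℂ} {μ : ι → ℂ} {c : ℝ}
    {A : Matrix m m ℂ} (hP : ∀ i, (P i).IsHermitian) (h : ∑ i, μ i • P i = (c : ℂ) • A) :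
    ∑ i, star (μ i) • P i = (c : ℂ) • Aᴴ := by
  simpa only [conjTranspose_sum, conjTranspose_smul, (hP _).eq, Complex.star_def,
    Complex.conj_ofReal] using congrArg conjTranspose h

variable [Fintype m] [DecidableEq m]

-- For instance the spectral decomposition of a unitary `A`, with `c = 1`.
def HasDensityFrame (A : Matrix m m ℂ) : Prop :=
  ∃ (ι : Type) (_ : Fintype ι) (P : ι → Matrix m m ℂ) (μ : ι → ℂ) (c : ℝ), 0 < c ∧
    (∀ i, IsDensity (P i)) ∧ (∀ i, ‖μ i‖ ≤ 1) ∧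
    ∑ i, P i = (c : ℂ) • 1 ∧ ∑ i, μ i • P i = (c : ℂ) • A

lemma exists_isDensity_mul_eq_smul [Nonempty m] {A : Matrix m m ℂ} (hA : Aᴴ * A = 1) :
    ∃ (X : Matrix m m ℂ) (l : ℂ), IsDensity X ∧ ‖l‖ = 1 ∧ A * X = l • X := by
  obtain ⟨l, hl⟩ := Module.End.exists_eigenvalue (toLin' A)
  obtain ⟨v, hv⟩ := hl.exists_hasEigenvector
  have hAv : A *ᵥ v = l • v := by simpa using hv.apply_eq_smul
  set t := star v ⬝ᵥ v
  have ht : 0 < t := dotProduct_star_self_pos_iff.mpr hv.2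
  have hlt : star l * l * t = t := by
    calc star l * l * t = star (A *ᵥ v) ⬝ᵥ (A *ᵥ v) := by
          rw [hAv, star_smul, smul_dotProduct, dotProduct_smul, smul_eq_mul, smul_eq_mul]; ring
      _ = t := by rw [star_mulVec, ← dotProduct_mulVec, mulVec_mulVec, hA, one_mulVec]
  have hl1 : ‖l‖ = 1 := by
    have : (‖l‖ : ℂ) ^ 2 = 1 := by
      rw [← Complex.conj_mul']
      exact mul_right_cancel₀ ht.ne' (by rw [one_mul]; exact hlt)
    exact (pow_eq_one_iff_of_nonneg (norm_nonneg l) two_ne_zero).mp (by exact_mod_cast this)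
  refine ⟨t⁻¹ • vecMulVec v (star v), l,
    ⟨(posSemidef_vecMulVec_self_star v).smul (inv_nonneg.mpr ht.le), ?_⟩, hl1, ?_⟩
  · rw [trace_smul, trace_vecMulVec, dotProduct_comm, smul_eq_mul, inv_mul_cancel₀ ht.ne']
  · rw [Matrix.mul_smul, mul_vecMulVec, hAv, smul_vecMulVec, smul_comm]

/-- The frame is `Uᵢ X Uᵢ†` with coefficients `ωᵢ l`. -/
lemma IsTightFrame.hasDensityFrame {ι : Type} [Fintype ι] {U : ι → Matrix m m ℂ} {c : ℝ}
    (hc : 0 < c) (hU : IsTightFrame U c) (hUU : ∀ i, (U i)ᴴ * U i = 1) {A : Matrix m m ℂ}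
    {ω : ι → ℂ} (hω : ∀ i, ‖ω i‖ ≤ 1) (hAU : ∀ i, A * U i = ω i • (U i * A))
    {X : Matrix m m ℂ} {l : ℂ} (hX : IsDensity X) (hl : ‖l‖ ≤ 1) (hAX : A * X = l • X) :
    HasDensityFrame A := by
  have hP1 : ∑ i, U i * X * (U i)ᴴ = (c : ℂ) • 1 := by
    rw [hU.sum_mul_mul_conjTranspose, hX.2, mul_one]
  have hAP i : (ω i * l) • (U i * X * (U i)ᴴ) = A * (U i * X * (U i)ᴴ) := by
    calc (ω i * l) • (U i * X * (U i)ᴴ) = ω i • (U i * (A * X)) * (U i)ᴴ := by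
          rw [hAX, Matrix.mul_smul, smul_mul, smul_mul, smul_smul]
      _ = A * (U i * X * (U i)ᴴ) := by
          rw [← Matrix.mul_assoc, ← smul_mul, ← hAU]
          simp only [Matrix.mul_assoc]
  refine ⟨ι, inferInstance, fun i => U i * X * (U i)ᴴ, fun i => ω i * l, c, hc,
    fun i => ⟨hX.1.mul_mul_conjTranspose_same _, ?_⟩, fun i => ?_, hP1, ?_⟩
  · rw [trace_mul_cycle, hUU, Matrix.one_mul, hX.2]
  · rw [norm_mul]
    exact mul_le_one₀ (hω i) (norm_nonneg _) hl
  · simp only [hAP, ← Matrix.mul_sum, hP1, Matrix.mul_smul, Matrix.mul_one]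

variable [Fintype n] [DecidableEq n]

lemma HasDensityFrame.norm_smul_one_add_mem_separableCone {A : Matrix m m ℂ} {B : Matrix n n ℂ}
    (hA : HasDensityFrame A) (hB : HasDensityFrame B) (s : ℂ) :
    (‖s‖ : ℂ) • 1 + (s / 2) • (A ⊗ₖ B) + (star s / 2) • (A ⊗ₖ B)ᴴ ∈ separableCone m n := by
  obtain ⟨ι, _, P, μ, c, hc, hP, hμ, hP1, hPA⟩ := hA
  obtain ⟨κ, _, Q, ν, c', hc', hQ, hν, hQ1, hQB⟩ := hB
  have hcoeff i j : ((‖s‖ + (s * (μ i * ν j)).re : ℝ) : ℂ)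
      = (‖s‖ : ℂ) * (1 * 1) + s / 2 * (μ i * ν j) + star s / 2 * (star (μ i) * star (ν j)) := by
    rw [Complex.ofReal_add, Complex.re_eq_add_conj]
    simp only [map_mul, Complex.star_def]
    ring
  have key : ((c * c' : ℝ) : ℂ) • ((‖s‖ : ℂ) • 1 + (s / 2) • (A ⊗ₖ B) + (star s / 2) • (A ⊗ₖ B)ᴴ)
      = ∑ i, ∑ j, ((‖s‖ + (s * (μ i * ν j)).re : ℝ) : ℂ) • (P i ⊗ₖ Q j) := by
    calc _ = (‖s‖ : ℂ) • ((∑ i, (1 : ℂ) • P i) ⊗ₖ ∑ j, (1 : ℂ) • Q j)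
          + (s / 2) • ((∑ i, μ i • P i) ⊗ₖ ∑ j, ν j • Q j)
          + (star s / 2) • ((∑ i, star (μ i) • P i) ⊗ₖ ∑ j, star (ν j) • Q j) := by
          simp only [one_smul, hP1, hQ1, hPA, hQB,
            sum_star_smul_of_isHermitian (fun i => (hP i).1.isHermitian) hPA,
            sum_star_smul_of_isHermitian (fun i => (hQ i).1.isHermitian) hQB,
            conjTranspose_kronecker, smul_kronecker, kronecker_smul, one_kronecker_one,
            Complex.ofReal_mul]
          module
      _ = _ := by
          simp only [sum_smul_kronecker_sum_smul, Finset.smul_sum, smul_smul,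
            ← Finset.sum_add_distrib, ← add_smul, hcoeff]
  rw [← ofReal_smul_mem_separableCone_iff (mul_pos hc hc'), key]
  refine Submodule.sum_mem _ fun i _ => Submodule.sum_mem _ fun j _ => ?_
  refine ofReal_smul_mem_separableCone ?_ (kronecker_mem_separableCone (hP i) (hQ j))
  have : ‖s * (μ i * ν j)‖ ≤ ‖s‖ := by
    rw [norm_mul, norm_mul]
    exact mul_le_of_le_one_right (norm_nonneg s) (mul_le_one₀ (hμ i) (norm_nonneg _) (hν j))
  linarith [Complex.abs_re_le_norm (s * (μ i * ν j)), neg_abs_le (s * (μ i * ν j)).re]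

theorem mem_separableCone_of_sum_norm_trace_le_two {ι κ : Type*} [Fintype ι] [Fintype κ]
    {E : ι → Matrix m m ℂ} {F : κ → Matrix n n ℂ} {c c' : ℝ} (hc : 0 < c) (hc' : 0 < c')
    (hE : IsTightFrame E c) (hF : IsTightFrame F c')
    (hEd : ∀ i, HasDensityFrame (E i)) (hFd : ∀ j, HasDensityFrame (F j))
    {i₀ : ι} {j₀ : κ} (hE₀ : E i₀ = 1) (hF₀ : F j₀ = 1)
    {ρ : Matrix (m × n) (m × n) ℂ} (hρ : ρ.IsHermitian) (htr : ρ.trace = 1)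
    (hsum : ∑ i, ∑ j, ‖((E i ⊗ₖ F j)ᴴ * ρ).trace‖ ≤ 2) : ρ ∈ separableCone m n := by
  classical
  set K : ι × κ → Matrix (m × n) (m × n) ℂ := fun γ => E γ.1 ⊗ₖ F γ.2
  set s : ι × κ → ℂ := fun γ => ((K γ)ᴴ * ρ).trace
  set block : ι × κ → Matrix (m × n) (m × n) ℂ :=
    fun γ => (‖s γ‖ : ℂ) • 1 + (s γ / 2) • K γ + (star (s γ) / 2) • (K γ)ᴴ
  have hblock γ : block γ ∈ separableCone m n :=
    (hEd γ.1).norm_smul_one_add_mem_separableCone (hFd γ.2) (s γ)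
  have hexp : ∑ γ, s γ • K γ = ((c * c' : ℝ) : ℂ) • ρ :=
    (hE.kronecker hF).sum_trace_conjTranspose_mul_smul ρ
  have hexp' : ∑ γ, star (s γ) • (K γ)ᴴ = ((c * c' : ℝ) : ℂ) • ρ := by
    simpa only [conjTranspose_sum, conjTranspose_smul, hρ.eq, Complex.star_def,
      Complex.conj_ofReal] using congrArg conjTranspose hexp
  have hsum_block : ∑ γ, block γ = ((∑ γ, ‖s γ‖ : ℝ) : ℂ) • 1 + ((c * c' : ℝ) : ℂ) • ρ := by
    simp only [block, Finset.sum_add_distrib, ← Finset.sum_smul, Complex.ofReal_sum, div_eq_inv_mul,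
      mul_smul, ← Finset.smul_sum, hexp, hexp']
    module
  have hK₀ : K (i₀, j₀) = 1 := by simp only [K, hE₀, hF₀, one_kronecker_one]
  have hblock₀ : block (i₀, j₀) = (2 : ℂ) • 1 := by
    simp only [block, s, hK₀, conjTranspose_one, Matrix.one_mul, htr, norm_one, Complex.ofReal_one,
      star_one]
    module
  have hS : ∑ γ, ‖s γ‖ ≤ 2 := by simpa only [Fintype.sum_prod_type] using hsum
  have hdecomp : ((c * c' : ℝ) : ℂ) • ρ = (((2 - ∑ γ, ‖s γ‖) / 2 : ℝ) : ℂ) • block (i₀, j₀)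
      + ∑ γ ∈ Finset.univ.erase (i₀, j₀), block γ := by
    rw [Finset.sum_erase_eq_sub (Finset.mem_univ _), hsum_block, hblock₀]
    push_cast
    module
  rw [← ofReal_smul_mem_separableCone_iff (mul_pos hc hc'), hdecomp]
  exact add_mem (ofReal_smul_mem_separableCone (by linarith) (hblock _))
    (Submodule.sum_mem _ fun γ _ => hblock γ)

end Matrix

lemma isSeparableState_of_mem_separableCone {d : ℕ} [NeZero d]
    {ρ : Matrix (ZMod d × ZMod d) (ZMod d × ZMod d) ℂ} (hρ : ρ ∈ separableCone (ZMod d) (ZMod d))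
    (htr : ρ.trace = 1) : IsSeparableState ρ := by
  obtain ⟨n, w, M, rfl⟩ := Submodule.mem_span_set'.mp hρ
  choose σ τ hσ hτ hM using fun i => (M i).2
  have hsum : ∑ i, (w i • (M i : Matrix _ _ ℂ)) = ∑ i, ((w i : ℝ) : ℂ) • (σ i ⊗ₖ τ i) := by
    refine Finset.sum_congr rfl fun i _ => ?_
    rw [← hM]; rfl
  refine ⟨n, fun i => w i, σ, τ, fun i => (w i).2, ?_, hσ, hτ, hsum⟩
  rw [hsum, trace_sum] at htr
  simp only [trace_smul, trace_kronecker, (hσ _).2, (hτ _).2, mul_one, smul_eq_mul] at htr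
  exact_mod_cast htr

section SpinMatrices

variable {d : ℕ} [NeZero d]

lemma spinS_apply (j k x y : ZMod d) :
    spinS d j k x y = if y = x + k then ZMod.stdAddChar (j * x) else 0 := by
  have hjx : j * x = (((j.val * x.val : ℕ) : ℤ) : ZMod d) := by simp
  rw [spinS, of_apply, hjx, ZMod.stdAddChar_coe, eta, ← Complex.exp_nat_mul]
  push_cast
  ring_nf

lemma spinS_zero_zero : spinS d 0 0 = 1 := by
  ext x y
  simp [spinS_apply, one_apply, eq_comm]

lemma spinS_mul_spinS (j k a b : ZMod d) :
    spinS d j k * spinS d a b = ZMod.stdAddChar (a * k) • spinS d (j + a) (k + b) := by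
  ext x y
  simp only [mul_apply, spinS_apply j k, ite_mul, zero_mul, Finset.sum_ite_eq', Finset.mem_univ,
    if_true]
  simp only [spinS_apply, Matrix.smul_apply, smul_eq_mul, mul_ite, mul_zero, ← add_assoc]
  split_ifs
  · rw [← AddChar.map_add_eq_mul, ← AddChar.map_add_eq_mul]; ring_nf
  · rfl

lemma conjTranspose_spinS (j k : ZMod d) :
    (spinS d j k)ᴴ = ZMod.stdAddChar (j * k) • spinS d (-j) (-k) := by
  ext x y
  simp only [conjTranspose_apply, spinS_apply, Matrix.smul_apply, smul_eq_mul, mul_ite, mul_zero]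
  by_cases h : x = y + k
  · rw [if_pos h, if_pos (by rw [h]; ring), Complex.star_def, ← AddChar.map_neg_eq_conj,
      ← AddChar.map_add_eq_mul, h]
    ring_nf
  · rw [if_neg h, if_neg (fun h' => h (by rw [h']; ring)), star_zero]

lemma conjTranspose_spinS_mul_self (j k : ZMod d) : (spinS d j k)ᴴ * spinS d j k = 1 := by
  rw [conjTranspose_spinS, smul_mul, spinS_mul_spinS, smul_smul, ← AddChar.map_add_eq_mul,
    neg_add_cancel, neg_add_cancel, spinS_zero_zero, mul_neg, add_neg_cancel,
    AddChar.map_zero_eq_one, one_smul]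

lemma spinS_mul_spinS_comm (j k a b : ZMod d) :
    spinS d j k * spinS d a b = ZMod.stdAddChar (a * k - j * b) • (spinS d a b * spinS d j k) := by
  rw [spinS_mul_spinS, spinS_mul_spinS, smul_smul, ← AddChar.map_add_eq_mul, add_comm a, add_comm b]
  ring_nf

lemma sum_star_spinS_apply_mul_spinS_apply (j p q x y : ZMod d) :
    ∑ k, star (spinS d j k p q) * spinS d j k x y
      = if y - x = q - p then ZMod.stdAddChar (j * (x - p)) else 0 := by
  rw [Finset.sum_eq_single (q - p)]
  · rw [spinS_apply, spinS_apply, if_pos (add_sub_cancel p q).symm]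
    by_cases h : y - x = q - p
    · rw [if_pos (by rw [← h]; ring), if_pos h, Complex.star_def, ← AddChar.map_neg_eq_conj,
        ← AddChar.map_add_eq_mul]
      ring_nf
    · rw [if_neg (fun h' => h (by rw [h']; ring)), if_neg h, mul_zero]
  · intro k _ hk
    rw [spinS_apply, if_neg (fun h => hk (by rw [h]; ring)), star_zero, zero_mul]
  · simp

lemma isTightFrame_spinS : IsTightFrame (fun γ : ZMod d × ZMod d => spinS d γ.1 γ.2) d := by
  intro p q
  ext x y
  simp only [Matrix.sum_apply, Matrix.smul_apply, smul_eq_mul, Fintype.sum_prod_type,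
    sum_star_spinS_apply_mul_spinS_apply, single_apply]
  by_cases hC : y - x = q - p
  · simp only [hC, if_true, AddChar.sum_mulShift _ (ZMod.isPrimitive_stdAddChar d), ZMod.card]
    by_cases hx : x = p
    · subst hx
      simp [show q = y by simpa using hC.symm]
    · simp [sub_ne_zero.mpr hx, Ne.symm hx]
  · simp only [hC, if_false, Finset.sum_const_zero]
    rw [if_neg (fun h => hC (by rw [h.1, h.2])), mul_zero]

lemma hasDensityFrame_spinS (j k : ZMod d) : HasDensityFrame (spinS d j k) := by
  obtain ⟨X, l, hX, hl, hAX⟩ := exists_isDensity_mul_eq_smul (conjTranspose_spinS_mul_self j k)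
  exact isTightFrame_spinS.hasDensityFrame (Nat.cast_pos.mpr (NeZero.pos d))
    (fun γ => conjTranspose_spinS_mul_self γ.1 γ.2) (fun γ => (AddChar.norm_apply _ _).le)
    (fun γ => spinS_mul_spinS_comm j k γ.1 γ.2) hX hl.le hAX

end SpinMatrices

theorem separable_of_spin_coeff_sum_le_two_general (d : ℕ) [NeZero d]
    (ρ : Matrix (ZMod d × ZMod d) (ZMod d × ZMod d) ℂ)
    (hρ : ρ.PosSemidef ∧ ρ.trace = 1)
    (hsum : ∑ u1 : ZMod d, ∑ v1 : ZMod d, ∑ u2 : ZMod d, ∑ v2 : ZMod d,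
        ‖((spinS d u1 v1 ⊗ₖ spinS d u2 v2)ᴴ * ρ).trace‖ ≤ 2) :
    IsSeparableState ρ := by
  have hd : (0 : ℝ) < d := Nat.cast_pos.mpr (NeZero.pos d)
  have hframe (γ : ZMod d × ZMod d) := hasDensityFrame_spinS (d := d) γ.1 γ.2
  refine isSeparableState_of_mem_separableCone ?_ hρ.2
  refine mem_separableCone_of_sum_norm_trace_le_two hd hd isTightFrame_spinS isTightFrame_spinS
    hframe hframe (i₀ := (0, 0)) (j₀ := (0, 0)) spinS_zero_zero spinS_zero_zero
    hρ.1.isHermitian hρ.2 ?_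
  simpa only [Fintype.sum_prod_type] using hsum

/-- If `ρ` is a bipartite density whose spin coefficients
`s_{(u1,u2),(v1,v2)} = Tr((S_{u1,v1} ⊗ S_{u2,v2})† ρ)` satisfy
`Σ |s_{(u1,u2),(v1,v2)}| ≤ 2`, then `ρ` is separable. -/
theorem separable_of_spin_coeff_sum_le_two (d : ℕ) [NeZero d] (hd : 2 ≤ d)
    (ρ : Matrix (ZMod d × ZMod d) (ZMod d × ZMod d) ℂ)
    (hρ : ρ.PosSemidef ∧ ρ.trace = 1)
    (hsum : ∑ u1 : ZMod d, ∑ v1 : ZMod d, ∑ u2 : ZMod d, ∑ v2 : ZMod d,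
        ‖((spinS d u1 v1 ⊗ₖ spinS d u2 v2)ᴴ * ρ).trace‖ ≤ 2) :
    IsSeparableState ρ :=
  separable_of_spin_coeff_sum_le_two_general d ρ hρ hsum
end

section
/- Let d be an odd prime and ρ a bipartite density supported in M. For a = (a1,a2), m = (m1,m2) ∈ Z_d × Z_d define C(a,m) by d² C(a,m) = Σ_{k=1}^{d−1} Σ_{n1,n2 ∈ Z_d} η^{−(k(k−1)/2)(a1+a2) − k(m1+m2) − k(a1 n1 + a2 n2)} ρ_{n1 n2, (n1+k)(n2+k)}. Then every C(a,m) is a real number and ρ − ρ_D = Σ_{a1,a2 ∈ Z_d} Σ_{m1,m2 ∈ Z_d} C(a,m) · P_{a1,1}(m1) ⊗ P_{a2,1}(m2), where each P_{a,1}(m) is a rank-one projection. -/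
open Matrix Kronecker
open scoped ComplexOrder

/-- `P_{j,k}(r) = (1/d) Σ_{m=0}^{d−1} η^{mr} (S_{j,k})^m`. -/
noncomputable def spinP (d : ℕ) [NeZero d] (j k r : ZMod d) : Matrix (ZMod d) (ZMod d) ℂ :=
  (d : ℂ)⁻¹ • ∑ m : Fin d, eta d ^ (m.val * r.val) • spinS d j k ^ (m : ℕ)

/-- The coefficient `C(a,m)` determined by
`d² C(a,m) = Σ_{k=1}^{d−1} Σ_{n1,n2} η^{−(k(k−1)/2)(a1+a2) − k(m1+m2) − k(a1 n1 + a2 n2)}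
ρ_{n1 n2, (n1+k)(n2+k)}`. -/
noncomputable def Ccoef (d : ℕ) [NeZero d]
    (ρ : Matrix (ZMod d × ZMod d) (ZMod d × ZMod d) ℂ)
    (a m : ZMod d × ZMod d) : ℂ :=
  ((d : ℂ) ^ 2)⁻¹ *
    ∑ k ∈ Finset.Icc 1 (d - 1), ∑ n1 : ZMod d, ∑ n2 : ZMod d,
      eta d ^ (-(((k : ℤ) * ((k : ℤ) - 1) / 2) * ((a.1.val : ℤ) + (a.2.val : ℤ))
          + (k : ℤ) * ((m.1.val : ℤ) + (m.2.val : ℤ))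
          + (k : ℤ) * ((a.1.val : ℤ) * (n1.val : ℤ) + (a.2.val : ℤ) * (n2.val : ℤ))))
        * ρ (n1, n2) (n1 + (k : ZMod d), n2 + (k : ZMod d))

/-!
Writing `ψ = ZMod.stdAddChar` (so `η ^ x = ψ x`), the matrix `P_{a,1}(r)` has entries
`d⁻¹ ψ(φ(l) - φ(j))` with `φ(n) = r n + a n(n-1)/2` (a half exists in `ZMod d` as `d` is
odd), i.e. it is `d⁻¹ v̄ vᵀ` for the vector
`v = ψ ∘ φ` of unimodular entries, hence a rank-one orthogonal projection.
Summing the phases of the coefficients against these projections, orthogonality of the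
characters of `ZMod d` gives `Σ_{a,m} ψ(-a(k(k-1)/2 + kn) - mk) P_{a,1}(m) = d E_{n,n+k}` for
`k ≠ 0`, so `Σ C(a,m) P ⊗ P` reassembles `Σ_{k ≠ 0} Σ_n ρ_{n,n+k} E_{n,n+k}`, which is
`ρ - ρ_D` for `ρ` supported in `M`. The substitution `(k, n) ↦ (-k, n + k)` conjugates the
coefficients, which makes them real when `ρ` is Hermitian.
-/

open ZMod

section LinearAlgebra

lemma sum_kronecker_sum {ι κ l m n p α : Type*} [NonUnitalNonAssocSemiring α]
    (s : Finset ι) (t : Finset κ) (A : ι → Matrix l m α) (B : κ → Matrix n p α) :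
    (∑ i ∈ s, A i) ⊗ₖ (∑ j ∈ t, B j) = ∑ i ∈ s, ∑ j ∈ t, A i ⊗ₖ B j := by
  ext
  simp [Matrix.sum_apply, Finset.sum_mul_sum]

lemma rank_vecMulVec_of_ne_zero {K m n : Type*} [Field K] [Fintype m] [Fintype n]
    {w : m → K} {v : n → K} (hw : w ≠ 0) (hv : v ≠ 0) : (vecMulVec w v).rank = 1 := by
  refine le_antisymm (rank_vecMulVec_le w v) (Nat.one_le_iff_ne_zero.mpr ?_)
  rw [rank_eq_finrank_span_cols, Ne, Submodule.finrank_eq_zero, Submodule.span_eq_bot]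
  obtain ⟨j, hj⟩ := Function.ne_iff.mp hv
  refine fun h => hw (funext fun i => ?_)
  exact (mul_eq_zero.mp (congrFun (h _ ⟨j, rfl⟩) i)).resolve_right hj

variable {K n : Type*} [Field K] [StarRing K] [Fintype n]

lemma isHermitian_inv_dotProduct_star_smul_vecMulVec (v : n → K) :
    ((v ⬝ᵥ star v)⁻¹ • vecMulVec (star v) v).IsHermitian := by
  rw [IsHermitian, conjTranspose_smul, conjTranspose_vecMulVec, star_star, star_inv₀,
    ← dotProduct_star]

lemma isIdempotentElem_inv_dotProduct_star_smul_vecMulVec {v : n → K} (hv : v ⬝ᵥ star v ≠ 0) :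
    IsIdempotentElem ((v ⬝ᵥ star v)⁻¹ • vecMulVec (star v) v) := by
  rw [IsIdempotentElem, smul_mul_smul, vecMulVec_mul_vecMulVec, vecMulVec_smul, smul_smul,
    mul_assoc, inv_mul_cancel₀ hv, mul_one]

lemma rank_inv_dotProduct_star_smul_vecMulVec {v : n → K} (hv : v ⬝ᵥ star v ≠ 0) :
    ((v ⬝ᵥ star v)⁻¹ • vecMulVec (star v) v).rank = 1 := by
  have hv0 : v ≠ 0 := by
    rintro rfl
    simp at hv
  rw [rank_smul_of_mem_nonZeroDivisors _ (mem_nonZeroDivisors_of_ne_zero (inv_ne_zero hv)),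
    rank_vecMulVec_of_ne_zero (star_ne_zero.mpr hv0) hv0]

lemma sub_diagonal_diag_eq_sum_single {G R : Type*} [AddCommGroup G] [Fintype G]
    [DecidableEq G] [Ring R] {ρ : Matrix (G × G) (G × G) R}
    (hρ : ∀ j1 j2 k1 k2 : G, j2 - j1 ≠ k2 - k1 → ρ (j1, j2) (k1, k2) = 0) :
    ρ - diagonal ρ.diag = ∑ k ∈ Finset.univ.erase 0, ∑ n : G × G,
      ρ n (n.1 + k, n.2 + k) • single n (n.1 + k, n.2 + k) 1 := by
  ext ⟨j1, j2⟩ ⟨l1, l2⟩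
  have hcond : ∀ k : G, (j1 + k = l1 ∧ j2 + k = l2) ↔ (k = l1 - j1 ∧ l2 - j2 = l1 - j1) := by
    intro k
    constructor
    · rintro ⟨rfl, rfl⟩
      simp
    · rintro ⟨rfl, h⟩
      exact ⟨add_sub_cancel j1 l1, by rw [← h, add_sub_cancel]⟩
  simp only [Matrix.sub_apply, diagonal_apply, diag_apply, Matrix.sum_apply, Matrix.smul_apply,
    single_apply, smul_eq_mul, mul_ite, mul_one, mul_zero, Prod.mk.injEq, ite_and,
    Fintype.sum_ite_eq']
  simp only [← ite_and, hcond]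
  simp only [ite_and, Finset.sum_ite_eq', Finset.mem_erase, Finset.mem_univ, if_true,
    add_sub_cancel]
  by_cases h : l2 - j2 = l1 - j1
  · have hl2 : j2 + (l1 - j1) = l2 := by rw [← h, add_sub_cancel]
    split_ifs <;> grind
  · have : j2 - j1 ≠ l2 - l1 := fun h' => h (by rw [sub_eq_sub_iff_sub_eq_sub, h'])
    split_ifs <;> grind

end LinearAlgebra

lemma quadratic_phase_eq_zero_iff {F : Type*} [Field F] [NeZero (2 : F)] {k : F} (hk : k ≠ 0)
    (n j l : F) :
    (l * (l - 1) / 2 - j * (j - 1) / 2 - (k * (k - 1) / 2 + k * n) = 0 ∧ l - j - k = 0) ↔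
      (n = j ∧ n + k = l) := by
  constructor
  · rintro ⟨hX, hY⟩
    obtain rfl : l = j + k := by linear_combination hY
    -- `(j + k)(j + k - 1)/2 - j(j - 1)/2 - k(k - 1)/2 = jk`
    have : k * (j - n) = 0 := by
      rw [← hX]
      field_simp
      ring
    have hn : n = j := (sub_eq_zero.mp ((mul_eq_zero.mp this).resolve_left hk)).symm
    exact ⟨hn, by rw [hn]⟩
  · rintro ⟨rfl, rfl⟩
    constructor
    · field_simp
      ring
    · ring

section Characters

variable {d : ℕ} [NeZero d]

lemma eta_zpow (z : ℤ) : eta d ^ z = stdAddChar (z : ZMod d) := by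
  rw [stdAddChar_coe, eta, ← Complex.exp_int_mul]
  ring_nf

lemma eta_pow (n : ℕ) : eta d ^ n = stdAddChar (n : ZMod d) := by
  simpa using eta_zpow (d := d) n

lemma star_stdAddChar (x : ZMod d) : star (stdAddChar x) = stdAddChar (-x) := by
  rw [stdAddChar_apply, stdAddChar_apply, AddChar.map_neg_eq_inv, Circle.coe_inv_eq_conj]
  rfl

lemma sum_stdAddChar_mul (x : ZMod d) :
    ∑ a : ZMod d, stdAddChar (a * x) = if x = 0 then (d : ℂ) else 0 := by
  rw [AddChar.sum_mulShift x (isPrimitive_stdAddChar d), ZMod.card]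
  split_ifs <;> simp

lemma spinS_one_apply (a j l : ZMod d) :
    spinS d a 1 j l = if l = j + 1 then stdAddChar (a * j) else 0 := by
  simp [spinS, eta_pow]

lemma spinS_one_pow_apply (a : ZMod d) (t : ℕ) (j l : ZMod d) :
    (spinS d a 1 ^ t) j l =
      if l = j + t then stdAddChar (a * ((t : ZMod d) * j + ((t.choose 2 : ℕ) : ZMod d)))
      else 0 := by
  induction t generalizing l with
  | zero => simp [one_apply, eq_comm]
  | succ t ih =>
    rw [pow_succ, mul_apply, Finset.sum_eq_single (j + t) (fun p _ hp => by simp [ih, hp])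
      (by simp), ih, if_pos rfl, spinS_one_apply]
    rw [mul_ite, mul_zero, ← AddChar.map_add_eq_mul, Nat.choose_succ_succ', Nat.choose_one_right,
      Nat.cast_succ, add_assoc]
    congr 2
    push_cast
    ring

end Characters

section Phases

variable {d : ℕ} [Fact d.Prime]

def spinPhase (a r n : ZMod d) : ZMod d := r * n + a * (n * (n - 1) / 2)

def coefPhase (a m k n : ZMod d) : ZMod d := a * (k * (k - 1) / 2 + k * n) + m * k

lemma coefPhase_neg_add [NeZero (2 : ZMod d)] (a m k n : ZMod d) :
    coefPhase a m (-k) (n + k) = -coefPhase a m k n := by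
  rw [coefPhase, coefPhase]
  field_simp
  ring

end Phases

section Projections

variable {d : ℕ} [NeZero d] [Fact d.Prime]

noncomputable def spinVec (a r : ZMod d) : ZMod d → ℂ := fun n => stdAddChar (spinPhase a r n)

lemma spinVec_dotProduct_star (a r : ZMod d) : spinVec a r ⬝ᵥ star (spinVec a r) = d := by
  simp [dotProduct, spinVec, star_stdAddChar, ← AddChar.map_add_eq_mul, ZMod.card]

variable [NeZero (2 : ZMod d)]

lemma spinP_one_apply (a r j l : ZMod d) :
    spinP d a 1 r j l = (d : ℂ)⁻¹ * stdAddChar (spinPhase a r l - spinPhase a r j) := by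
  rw [spinP, Matrix.smul_apply, Matrix.sum_apply, smul_eq_mul]
  simp only [Matrix.smul_apply, smul_eq_mul, spinS_one_pow_apply, eta_pow]
  rw [Fintype.sum_eq_single ⟨(l - j).val, val_lt _⟩ fun t ht => ?_]
  · simp only [natCast_val, cast_id', id, Nat.cast_choose_two, if_pos (add_sub_cancel j l).symm,
      ← AddChar.map_add_eq_mul, spinPhase, Nat.cast_mul]
    congr 2
    field_simp
    ring
  · rw [if_neg, mul_zero]
    rintro rfl
    exact ht (Fin.ext (by simp [val_cast_of_lt t.isLt]))

lemma spinP_one_eq (a r : ZMod d) :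
    spinP d a 1 r = (spinVec a r ⬝ᵥ star (spinVec a r))⁻¹ •
      vecMulVec (star (spinVec a r)) (spinVec a r) := by
  ext j l
  rw [spinP_one_apply, spinVec_dotProduct_star, Matrix.smul_apply, vecMulVec_apply, smul_eq_mul,
    sub_eq_neg_add, AddChar.map_add_eq_mul]
  simp [spinVec, star_stdAddChar]

lemma sum_stdAddChar_smul_spinP_one {k : ZMod d} (hk : k ≠ 0) (n : ZMod d) :
    ∑ a : ZMod d, ∑ m : ZMod d, stdAddChar (-coefPhase a m k n) • spinP d a 1 m =
      (d : ℂ) • single n (n + k) 1 := by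
  ext j l
  have hsplit : ∀ a m : ZMod d, stdAddChar (-coefPhase a m k n) * spinP d a 1 m j l =
      (d : ℂ)⁻¹ * (stdAddChar (a * (l * (l - 1) / 2 - j * (j - 1) / 2 - (k * (k - 1) / 2 + k * n)))
        * stdAddChar (m * (l - j - k))) := by
    intro a m
    rw [spinP_one_apply, mul_left_comm, ← AddChar.map_add_eq_mul, ← AddChar.map_add_eq_mul,
      coefPhase, spinPhase, spinPhase]
    ring_nf
  simp only [Matrix.sum_apply, Matrix.smul_apply, smul_eq_mul, hsplit, ← Finset.mul_sum,
    ← Finset.sum_mul, sum_stdAddChar_mul, single_apply, ← quadratic_phase_eq_zero_iff hk n j l]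
  have hd : (d : ℂ) ≠ 0 := NeZero.ne _
  split_ifs <;> simp_all

lemma sum_stdAddChar_smul_kronecker_spinP_one {k : ZMod d} (hk : k ≠ 0) (n : ZMod d × ZMod d) :
    ∑ a1 : ZMod d, ∑ a2 : ZMod d, ∑ m1 : ZMod d, ∑ m2 : ZMod d,
      stdAddChar (-(coefPhase a1 m1 k n.1 + coefPhase a2 m2 k n.2)) •
        (spinP d a1 1 m1 ⊗ₖ spinP d a2 1 m2) =
      ((d : ℂ) ^ 2) • single n (n.1 + k, n.2 + k) 1 := by
  calc _ = (∑ a1 : ZMod d, ∑ m1 : ZMod d, stdAddChar (-coefPhase a1 m1 k n.1) • spinP d a1 1 m1)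
        ⊗ₖ (∑ a2 : ZMod d, ∑ m2 : ZMod d, stdAddChar (-coefPhase a2 m2 k n.2) • spinP d a2 1 m2) := by
        simp only [sum_kronecker_sum, smul_kronecker, kronecker_smul, smul_smul, neg_add,
          AddChar.map_add_eq_mul, mul_comm]
    _ = _ := by
        rw [sum_stdAddChar_smul_spinP_one hk, sum_stdAddChar_smul_spinP_one hk, smul_kronecker,
          kronecker_smul, single_kronecker_single, smul_smul, sq, mul_one]

end Projections

section Coefficients

variable {d : ℕ} [NeZero d] [Fact d.Prime] [NeZero (2 : ZMod d)]

lemma Ccoef_eq (ρ : Matrix (ZMod d × ZMod d) (ZMod d × ZMod d) ℂ) (a m : ZMod d × ZMod d) :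
    Ccoef d ρ a m = ((d : ℂ) ^ 2)⁻¹ * ∑ k ∈ Finset.univ.erase 0, ∑ n : ZMod d × ZMod d,
      stdAddChar (-(coefPhase a.1 m.1 k n.1 + coefPhase a.2 m.2 k n.2)) *
        ρ n (n.1 + k, n.2 + k) := by
  have h2 : ((2 : ℤ) : ZMod d) ≠ 0 := by exact_mod_cast two_ne_zero
  have hval : ∀ k ∈ Finset.Icc 1 (d - 1), (k : ZMod d).val = k := fun k hk =>
    val_cast_of_lt (by have := NeZero.pos d; grind)
  rw [Ccoef]
  congr 1
  refine Finset.sum_nbij' (fun k => (k : ZMod d)) val (fun k hk => ?_) (fun k hk => ?_)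
    hval (fun k _ => natCast_zmod_val k) (fun k _ => ?_)
  · refine Finset.mem_erase.mpr ⟨fun h => ?_, Finset.mem_univ _⟩
    have := hval k hk
    grind [val_zero]
  · have := val_lt k
    have := (val_ne_zero k).mpr (Finset.ne_of_mem_erase hk)
    grind
  · rw [Fintype.sum_prod_type]
    refine Finset.sum_congr rfl fun n1 _ => Finset.sum_congr rfl fun n2 _ => ?_
    rw [eta_zpow]
    congr 2
    simp only [Int.cast_neg, Int.cast_add, Int.cast_mul,
      Int.cast_div (Int.even_mul_pred_self _).two_dvd h2, Int.cast_natCast, Int.cast_sub,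
      Int.cast_one, natCast_val, intCast_cast, cast_id', id_eq, coefPhase]
    ring

lemma star_Ccoef {ρ : Matrix (ZMod d × ZMod d) (ZMod d × ZMod d) ℂ} (hρ : ρ.IsHermitian)
    (a m : ZMod d × ZMod d) : star (Ccoef d ρ a m) = Ccoef d ρ a m := by
  rw [Ccoef_eq, star_mul', star_inv₀, star_pow, star_natCast, star_sum]
  congr 1
  refine Finset.sum_nbij' Neg.neg Neg.neg (by simp) (by simp) (by simp) (by simp) fun k _ => ?_
  rw [star_sum]
  refine Fintype.sum_equiv (Equiv.addRight (k, k)) _ _ fun n => ?_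
  simp only [Equiv.coe_addRight, Prod.fst_add, Prod.snd_add, coefPhase_neg_add, star_mul',
    star_stdAddChar, neg_neg, neg_add, hρ.apply, add_neg_cancel_right]
  rfl

lemma sum_Ccoef_smul_kronecker_spinP_one (ρ : Matrix (ZMod d × ZMod d) (ZMod d × ZMod d) ℂ) :
    ∑ a1 : ZMod d, ∑ a2 : ZMod d, ∑ m1 : ZMod d, ∑ m2 : ZMod d,
      Ccoef d ρ (a1, a2) (m1, m2) • (spinP d a1 1 m1 ⊗ₖ spinP d a2 1 m2) =
    ∑ k ∈ Finset.univ.erase 0, ∑ n : ZMod d × ZMod d,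
      ρ n (n.1 + k, n.2 + k) • single n (n.1 + k, n.2 + k) 1 := by
  simp only [Ccoef_eq, Finset.mul_sum, Finset.sum_smul]
  simp only [Finset.sum_comm (t := (Finset.univ : Finset (ZMod d × ZMod d)))]
  simp only [Finset.sum_comm (t := Finset.univ.erase (0 : ZMod d))]
  refine Finset.sum_congr rfl fun k hk => Finset.sum_congr rfl fun n _ => ?_
  have hterm : ∀ (z : ℂ) (M : Matrix (ZMod d × ZMod d) (ZMod d × ZMod d) ℂ),
      (((d : ℂ) ^ 2)⁻¹ * (z * ρ n (n.1 + k, n.2 + k))) • M =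
        (ρ n (n.1 + k, n.2 + k) * ((d : ℂ) ^ 2)⁻¹) • z • M := fun z M => by
    rw [smul_smul]
    ring_nf
  simp only [hterm, ← Finset.smul_sum,
    sum_stdAddChar_smul_kronecker_spinP_one (Finset.ne_of_mem_erase hk)]
  rw [smul_smul, mul_assoc, inv_mul_cancel₀ (by simp [NeZero.ne d]), mul_one]

end Coefficients

/-- For `d` an odd prime and `ρ` a bipartite density supported
in `M`, every `C(a,m)` is real, each `P_{a,1}(m)` is a rank-one projection, and
`ρ − ρ_D = Σ_{a1,a2} Σ_{m1,m2} C(a,m) P_{a1,1}(m1) ⊗ P_{a2,1}(m2)`. -/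
theorem structural_decomposition (d : ℕ) [NeZero d] (hd : d.Prime) (hodd : Odd d)
    (ρ : Matrix (ZMod d × ZMod d) (ZMod d × ZMod d) ℂ)
    (hρ : ρ.PosSemidef ∧ ρ.trace = 1)
    (hsupp : ∀ j1 j2 k1 k2 : ZMod d, j2 - j1 ≠ k2 - k1 → ρ (j1, j2) (k1, k2) = 0) :
    (∀ a m : ZMod d × ZMod d, ∃ c : ℝ, Ccoef d ρ a m = (c : ℂ)) ∧
    (∀ a m : ZMod d,
        spinP d a 1 m * spinP d a 1 m = spinP d a 1 m ∧
        (spinP d a 1 m).IsHermitian ∧ (spinP d a 1 m).rank = 1) ∧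
    (ρ - Matrix.diagonal ρ.diag
      = ∑ a1 : ZMod d, ∑ a2 : ZMod d, ∑ m1 : ZMod d, ∑ m2 : ZMod d,
          Ccoef d ρ (a1, a2) (m1, m2) • (spinP d a1 1 m1 ⊗ₖ spinP d a2 1 m2)) := by
  have : Fact d.Prime := ⟨hd⟩
  have : NeZero (2 : ZMod d) := ⟨Ring.two_ne_zero <| by
    rw [ringChar_zmod_n]
    rintro rfl
    exact Nat.not_odd_iff_even.mpr even_two hodd⟩
  refine ⟨fun a m => ⟨(Ccoef d ρ a m).re, ?_⟩, fun a m => ?_, ?_⟩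
  · exact (Complex.conj_eq_iff_re.mp (star_Ccoef hρ.1.isHermitian a m)).symm
  · have hv : spinVec a m ⬝ᵥ star (spinVec a m) ≠ 0 := by
      simp [spinVec_dotProduct_star, NeZero.ne d]
    rw [spinP_one_eq]
    exact ⟨isIdempotentElem_inv_dotProduct_star_smul_vecMulVec hv,
      isHermitian_inv_dotProduct_star_smul_vecMulVec _,
      rank_inv_dotProduct_star_smul_vecMulVec hv⟩
  · rw [sub_diagonal_diag_eq_sum_single hsupp, sum_Ccoef_smul_kronecker_spinP_one]
end
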